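/- arXiv:math/0304333 — 2 statements merged into one kernel-verified Lean document; each statement's English description precedes it below -/
import Mathlib

section
/- The winding map w : ℝ³ → ℝ³ given in cylindrical coordinates by (r, θ, z) ↦ (r, 2θ, z), i.e. w(x, y, z) = (Re((x+iy)²)/√(x²+y²), Im((x+iy)²)/√(x²+y²), z) for (x,y) ≠ (0,0) and w(0,0,z) = (0,0,z), is Lipschitz continuous. -/
open Complex

private lemma winding_key (x y : ℂ) (hx : x ≠ 0) (hy : y ≠ 0)
    (hba : ‖y‖ ≤ ‖x‖) :
    ‖x ^ 2 / ((‖x‖ : ℝ) : ℂ) - y ^ 2 / ((‖y‖ : ℝ) : ℂ)‖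
      ≤ 3 * ‖x - y‖ := by
  set a := ‖x‖ with ha
  set b := ‖y‖ with hb
  have ha0 : 0 < a := norm_pos_iff.mpr hx
  have hb0 : 0 < b := norm_pos_iff.mpr hy
  have haC : (a : ℂ) ≠ 0 := by exact_mod_cast ne_of_gt ha0
  have hbC : (b : ℂ) ≠ 0 := by exact_mod_cast ne_of_gt hb0
  have hid : x ^ 2 / (a : ℂ) - y ^ 2 / (b : ℂ)
      = (x ^ 2 - y ^ 2) / (a : ℂ) + y ^ 2 * (((b : ℂ) - a) / ((a : ℂ) * b)) := by
    field_simp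
    ring
  rw [hid]
  have habd : a - b ≤ ‖x - y‖ := by
    have := abs_norm_sub_norm_le x y
    rw [abs_le] at this
    linarith [this.2]
  have hs : ‖x + y‖ ≤ a + b := norm_add_le x y
  have h1 : ‖(x ^ 2 - y ^ 2) / (a : ℂ)‖
      = ‖x + y‖ * ‖x - y‖ / a := by
    rw [norm_div, ← norm_mul]
    congr 1
    · congr 1; ring
    · simp [_root_.abs_of_pos ha0]
  have h2 : ‖y ^ 2 * (((b : ℂ) - a) / ((a : ℂ) * b))‖
      = b ^ 2 * ((a - b) / (a * b)) := by
    rw [norm_mul, norm_div, norm_mul, norm_pow]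
    rw [show ((b : ℂ) - a) = ((b - a : ℝ) : ℂ) by push_cast; ring]
    rw [Complex.norm_real, Complex.norm_real, Complex.norm_real, Real.norm_eq_abs, Real.norm_eq_abs, Real.norm_eq_abs,
      _root_.abs_of_pos ha0, _root_.abs_of_pos hb0, abs_sub_comm,
      _root_.abs_of_nonneg (by linarith : (0:ℝ) ≤ a - b)]
  calc ‖(x ^ 2 - y ^ 2) / (a : ℂ) + y ^ 2 * (((b : ℂ) - a) / ((a : ℂ) * b))‖
      ≤ ‖(x ^ 2 - y ^ 2) / (a : ℂ)‖
        + ‖y ^ 2 * (((b : ℂ) - a) / ((a : ℂ) * b))‖ := norm_add_le _ _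
    _ = ‖x + y‖ * ‖x - y‖ / a + b ^ 2 * ((a - b) / (a * b)) := by
        rw [h1, h2]
    _ ≤ 3 * ‖x - y‖ := by
        set d := ‖x - y‖ with hd
        have hd0 : 0 ≤ d := norm_nonneg _
        have e1 : ‖x + y‖ * d / a ≤ 2 * d := by
          rw [div_le_iff₀ ha0]
          nlinarith [mul_le_mul_of_nonneg_right hs hd0]
        have e2 : b ^ 2 * ((a - b) / (a * b)) ≤ d := by
          have heq : b ^ 2 * ((a - b) / (a * b)) = b * (a - b) / a := by
            field_simp
          rw [heq, div_le_iff₀ ha0]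
          nlinarith
        linarith

private lemma winding_g_lip :
    LipschitzWith 3 (fun ζ : ℂ => if ζ = 0 then (0 : ℂ) else ζ ^ 2 / ((‖ζ‖ : ℝ) : ℂ)) := by
  rw [lipschitzWith_iff_dist_le_mul]
  intro x y
  have key : ∀ u v : ℂ, ‖v‖ ≤ ‖u‖ →
      dist (if u = 0 then (0:ℂ) else u ^ 2 / ((‖u‖ : ℝ) : ℂ))
        (if v = 0 then (0:ℂ) else v ^ 2 / ((‖v‖ : ℝ) : ℂ)) ≤ 3 * dist u v := by
    intro u v huv
    rcases eq_or_ne v 0 with rfl | hv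
    · rcases eq_or_ne u 0 with rfl | hu
      · simp
      · rw [if_neg hu, if_pos rfl, dist_zero_right, dist_zero_right,
          norm_div, norm_pow]
        have h1 : ‖((‖u‖ : ℝ) : ℂ)‖ = ‖u‖ := by
          simp [_root_.abs_of_nonneg (norm_nonneg u)]
        rw [h1, sq, mul_div_assoc, div_self (ne_of_gt (norm_pos_iff.mpr hu)), mul_one]
        nlinarith [norm_nonneg u]
    · have hu : u ≠ 0 := by
        intro h; subst h; simp at huv
        exact hv huv
      simp only [if_neg hu, if_neg hv]
      rw [Complex.dist_eq, Complex.dist_eq]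
      exact winding_key u v hu hv huv
  rcases le_total (‖y‖) (‖x‖) with h | h
  · simpa using key x y h
  · have := key y x h
    rw [dist_comm, dist_comm y x] at this
    simpa using this

open Classical in
/-- The winding map `(ζ, z) ↦ (ζ²/|ζ|, z)` (mapping `(0,z)` to `(0,z)`), which in
cylindrical coordinates is `(r, θ, z) ↦ (r, 2θ, z)`, is Lipschitz continuous. -/
theorem winding_map_lipschitz :
    ∃ L : NNReal, LipschitzWith L
      (fun p : ℂ × ℝ =>
        ((if p.1 = 0 then (0 : ℂ) else p.1 ^ 2 / ((‖p.1‖ : ℝ) : ℂ)), p.2)) := by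
  refine ⟨3, ?_⟩
  rw [lipschitzWith_iff_dist_le_mul]
  intro p q
  rw [Prod.dist_eq, Prod.dist_eq]
  simp only
  have hmax : (0:ℝ) ≤ max (dist p.1 q.1) (dist p.2 q.2) :=
    le_max_of_le_left dist_nonneg
  refine max_le ?_ ?_
  · have h := winding_g_lip.dist_le_mul p.1 q.1
    refine h.trans ?_
    have : dist p.1 q.1 ≤ max (dist p.1 q.1) (dist p.2 q.2) := le_max_left _ _
    have h3 : (0:ℝ) ≤ ((3:NNReal):ℝ) := by positivity
    exact mul_le_mul_of_nonneg_left this h3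
  · refine (le_max_right (dist p.1 q.1) (dist p.2 q.2)).trans ?_
    exact le_mul_of_one_le_left hmax (by norm_num)
end

section
/- A 1-quasiregular linear map is conformal: if A : ℝⁿ → ℝⁿ is linear with det A > 0 and ‖A‖ⁿ = det A, then A is a positive scalar multiple of an orthogonal transformation, i.e. ⟪A u, A v⟫ = ‖A‖²·⟪u, v⟫ for all u, v. -/
/-!
`A†A` is symmetric, and its eigenvalues `‖A bᵢ‖²` (on an orthonormal eigenbasis `b`) lie in
`[0, ‖A‖²]` while their product is `det (A†A) = (det A)²`. If `‖A‖ⁿ = |det A|` this product is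
`(‖A‖²)ⁿ`, which forces every eigenvalue to equal `‖A‖²`; hence `A†A = ‖A‖² • id`.
-/

open RealInnerProductSpace Finset Module

theorem eq_of_forall_le_of_prod_eq_pow_card {ι R : Type*} [Fintype ι] [CommSemiring R]
    [LinearOrder R] [IsStrictOrderedRing R] {f : ι → R} {c : R} (hf0 : ∀ i, 0 ≤ f i)
    (hfc : ∀ i, f i ≤ c) (hprod : ∏ i, f i = c ^ Fintype.card ι) (i : ι) : f i = c := by
  classical
  refine (hfc i).antisymm (not_lt.1 fun hlt => hprod.not_lt ?_)
  have hc : 0 < c := (hf0 i).trans_lt hlt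
  calc ∏ j, f j = f i * ∏ j ∈ univ.erase i, f j := (mul_prod_erase _ _ (mem_univ i)).symm
    _ ≤ f i * ∏ j ∈ univ.erase i, c :=
      mul_le_mul_of_nonneg_left (prod_le_prod (fun j _ => hf0 j) fun j _ => hfc j) (hf0 i)
    _ < c * ∏ j ∈ univ.erase i, c := by gcongr
    _ = c ^ Fintype.card ι := mul_prod_erase _ (fun _ => c) (mem_univ i) |>.trans (by simp)

namespace LinearMap

variable {E F : Type*} [NormedAddCommGroup E] [InnerProductSpace ℝ E] [FiniteDimensional ℝ E]
  [NormedAddCommGroup F] [InnerProductSpace ℝ F] [FiniteDimensional ℝ F]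

theorem IsSymmetric.eq_smul_id_of_forall_eigenvalues_eq {T : E →ₗ[ℝ] E} (hT : T.IsSymmetric)
    {n : ℕ} (hn : finrank ℝ E = n) {c : ℝ} (hc : ∀ i, hT.eigenvalues hn i = c) :
    T = c • LinearMap.id :=
  (hT.eigenvectorBasis hn).toBasis.ext fun i => by
    simp [hT.apply_eigenvectorBasis, hc]

theorem det_adjoint_comp_self (T : E →ₗ[ℝ] E) : (T.adjoint ∘ₗ T).det = T.det ^ 2 := by
  rw [← normDet_sq, normDet_eq_abs_det, sq_abs, RCLike.ofReal_real_eq_id, id_eq]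

theorem eigenvalues_adjoint_comp_self_eq (T : E →ₗ[ℝ] F) {n : ℕ} (hn : finrank ℝ E = n)
    (i : Fin n) :
    T.isSymmetric_adjoint_comp_self.eigenvalues hn i =
      ‖T (T.isSymmetric_adjoint_comp_self.eigenvectorBasis hn i)‖ ^ 2 := by
  rw [← real_inner_self_eq_norm_sq, ← adjoint_inner_right, ← comp_apply,
    T.isSymmetric_adjoint_comp_self.apply_eigenvectorBasis, real_inner_smul_right,
    real_inner_self_eq_norm_sq, OrthonormalBasis.norm_eq_one]
  simp

end LinearMap

namespace ContinuousLinearMap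

variable {E F : Type*} [NormedAddCommGroup E] [InnerProductSpace ℝ E] [FiniteDimensional ℝ E]
  [NormedAddCommGroup F] [InnerProductSpace ℝ F] [FiniteDimensional ℝ F]

theorem eigenvalues_adjoint_comp_self_le (A : E →L[ℝ] F) {n : ℕ} (hn : finrank ℝ E = n)
    (i : Fin n) :
    (A : E →ₗ[ℝ] F).isSymmetric_adjoint_comp_self.eigenvalues hn i ≤ ‖A‖ ^ 2 := by
  rw [LinearMap.eigenvalues_adjoint_comp_self_eq]
  gcongr
  exact A.unit_le_opNorm _ (OrthonormalBasis.norm_eq_one _ _).le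

theorem adjoint_comp_self_eq_smul_id_of_norm_pow_finrank_eq_abs_det (A : E →L[ℝ] E)
    (h : ‖A‖ ^ finrank ℝ E = |A.det|) :
    (A : E →ₗ[ℝ] E).adjoint ∘ₗ A = ‖A‖ ^ 2 • LinearMap.id := by
  set T := (A : E →ₗ[ℝ] E)
  have hS := T.isSymmetric_adjoint_comp_self
  have hprod : ∏ i, hS.eigenvalues rfl i = (‖A‖ ^ 2) ^ Fintype.card (Fin (finrank ℝ E)) := by
    rw [Fintype.card_fin, ← pow_mul, mul_comm, pow_mul, h, sq_abs,
      ← LinearMap.det_adjoint_comp_self, hS.det_eq_prod_eigenvalues rfl]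
    simp
  exact hS.eq_smul_id_of_forall_eigenvalues_eq rfl <|
    eq_of_forall_le_of_prod_eq_pow_card (T.isPositive_adjoint_comp_self.nonneg_eigenvalues rfl)
      (A.eigenvalues_adjoint_comp_self_le rfl) hprod

theorem inner_map_map_of_norm_pow_finrank_eq_abs_det (A : E →L[ℝ] E)
    (h : ‖A‖ ^ finrank ℝ E = |A.det|) (u v : E) : ⟪A u, A v⟫ = ‖A‖ ^ 2 * ⟪u, v⟫ := by
  calc ⟪A u, A v⟫ = ⟪((A : E →ₗ[ℝ] E).adjoint ∘ₗ A) u, v⟫ :=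
        (LinearMap.adjoint_inner_left _ _ _).symm
    _ = ‖A‖ ^ 2 * ⟪u, v⟫ := by
      rw [adjoint_comp_self_eq_smul_id_of_norm_pow_finrank_eq_abs_det A h, LinearMap.smul_apply,
        LinearMap.id_apply, real_inner_smul_left]

end ContinuousLinearMap

theorem one_quasiregular_linear_is_conformal_general
    (n : ℕ)
    (A : EuclideanSpace ℝ (Fin n) →L[ℝ] EuclideanSpace ℝ (Fin n))
    (heq : ‖A‖ ^ n = A.det) :
    ∀ u v : EuclideanSpace ℝ (Fin n), ⟪A u, A v⟫ = ‖A‖ ^ 2 * ⟪u, v⟫ := by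
  have hdet_nonneg : 0 ≤ A.det := heq ▸ pow_nonneg (norm_nonneg A) n
  refine A.inner_map_map_of_norm_pow_finrank_eq_abs_det ?_
  rw [finrank_euclideanSpace_fin, heq, abs_of_nonneg hdet_nonneg]

/-- A `1`-quasiregular linear map is conformal: if `det A > 0` and `‖A‖ⁿ = det A`,
then `A` is a positive scalar multiple of an orthogonal transformation, i.e.
`⟪A u, A v⟫ = ‖A‖² ⟪u, v⟫` for all `u, v`. -/
theorem one_quasiregular_linear_is_conformal
    (n : ℕ) (hn : 1 ≤ n)
    (A : EuclideanSpace ℝ (Fin n) →L[ℝ] EuclideanSpace ℝ (Fin n))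
    (hdet : 0 < A.det) (heq : ‖A‖ ^ n = A.det) :
    ∀ u v : EuclideanSpace ℝ (Fin n), ⟪A u, A v⟫ = ‖A‖ ^ 2 * ⟪u, v⟫ :=
  one_quasiregular_linear_is_conformal_general n A heq
end
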